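/- Let s = 2k and t = (64k)^{2k}. Suppose x₁,…,x_n are vertices such that x_i is joined to x_j whenever 1 ≤ |i−j| ≤ k, and for each i a set B(x_i) of t vertices is given. Suppose that for every edge {x_i, x_j} (1 ≤ |i−j| ≤ k), the bipartite graph between B(x_i) and B(x_j) whose edges are the blue edges contains no K_{s,s} (so, by Kővári–Sós–Turán, at most 4t^{2−1/s} blue edges). If y_i ∈ B(x_i) are chosen independently and uniformly at random, then for each such pair the probability that {y_i, y_j} is blue is at most 4t^{−1/s}, and since 4·(4k)·4t^{−1/s} ≤ 1, by the Lovász Local Lemma there is a choice of y₁,…,y_n such that all pairs {y_i, y_j} with 1 ≤ |i−j| ≤ k are red edges. -/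

import Mathlib

/-!
Double counting the `s`-subsets of blue neighbourhoods shows that a `K_{s,s}`-free pair of
clusters satisfies `∑ₐ C(deg a, s) ≤ (s - 1) C(t, s)`. With the power-mean inequality this gives
the Kővári–Sós–Turán bound `4 t ^ (2 - 1/s)` on the blue pairs; with Markov's inequality it shows
that at most `(2k - 1)(16k) ^ (2k)` vertices of a cluster have `t / (8k)` or more blue neighbours
in a given other cluster. In place of the local lemma the `yᵢ` are then chosen greedily from left
to right: `yᵢ` avoids the blue neighbours of the `k` preceding choices (fewer than `k · t / (8k)`)
and the vertices of high degree towards the `k` following clusters, and these are fewer than `t`.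
-/

open SimpleGraph Finset

/-- `H` has a copy (an injective graph homomorphism image) in `G`. -/
def Copy {V W : Type*} (H : SimpleGraph W) (G : SimpleGraph V) : Prop :=
  ∃ f : H →g G, Function.Injective f

/-- `G → H`: every red/blue colouring of the edges of `G` (red edges given by a
subgraph `R ≤ G`, blue edges by `G \ R`) contains a monochromatic copy of `H`. -/
def Arrow {V W : Type*} (G : SimpleGraph V) (H : SimpleGraph W) : Prop :=
  ∀ R : SimpleGraph V, R ≤ G → Copy H R ∨ Copy H (G \ R)

/-- The size-Ramsey number `r̂(H)`. -/
noncomputable def sizeRamsey {W : Type*} (H : SimpleGraph W) : ℕ :=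
  sInf {m | ∃ (N : ℕ) (G : SimpleGraph (Fin N)), Arrow G H ∧ G.edgeSet.ncard = m}

/-- The (2-colour) Ramsey number `r(H)`. -/
noncomputable def ramseyNum {W : Type*} (H : SimpleGraph W) : ℕ :=
  sInf {N | Arrow (⊤ : SimpleGraph (Fin N)) H}

/-- The `k`-th power `H^k` of a graph: edges between distinct vertices at distance at most `k`. -/
def gpow {V : Type*} (H : SimpleGraph V) (k : ℕ) : SimpleGraph V where
  Adj u v := u ≠ v ∧ ∃ p : H.Walk u v, p.length ≤ k
  symm := by constructor; rintro u v ⟨h, p, hp⟩; exact ⟨h.symm, p.reverse, by simpa using hp⟩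
  loopless := by constructor; rintro u ⟨h, -⟩; exact h rfl

/-- The complete blow-up of `H` where each vertex is replaced by a clique of size `m`. -/
def blowup {V : Type*} (H : SimpleGraph V) (m : ℕ) : SimpleGraph (V × Fin m) where
  Adj x y := (x.1 = y.1 ∧ x.2 ≠ y.2) ∨ H.Adj x.1 y.1
  symm := by constructor; rintro x y (⟨h1, h2⟩ | h); exacts [Or.inl ⟨h1.symm, h2.symm⟩, Or.inr h.symm]
  loopless := by constructor; rintro x (⟨-, h⟩ | h); exacts [h rfl, H.loopless.irrefl _ h]

/-- `P_n^k`, the `k`-th power of the path on `n` vertices. -/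
def pathPow (n k : ℕ) : SimpleGraph (Fin n) where
  Adj i j := i ≠ j ∧ i.val - j.val ≤ k ∧ j.val - i.val ≤ k
  symm := by constructor; rintro i j ⟨h, h1, h2⟩; exact ⟨h.symm, h2, h1⟩
  loopless := by constructor; rintro i ⟨h, -⟩; exact h rfl

/-- `C_n^k`, the `k`-th power of the cycle on `n` vertices. -/
def cyclePow (n k : ℕ) : SimpleGraph (ZMod n) where
  Adj i j := i ≠ j ∧ ∃ d : ℕ, 1 ≤ d ∧ d ≤ k ∧ (i = j + (d : ZMod n) ∨ j = i + (d : ZMod n))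
  symm := by constructor; rintro i j ⟨h, d, h1, h2, h3⟩; exact ⟨h.symm, d, h1, h2, h3.symm⟩
  loopless := by constructor; rintro i ⟨h, -⟩; exact h rfl

open scoped Nat

theorem Nat.mul_le_two_mul_pow_of_le {u s : ℕ} (hs : 1 ≤ s) (hsu : s ≤ u) : u * s ≤ 2 * u ^ s := by
  obtain rfl | hs2 := hs.eq_or_lt
  · rw [pow_one]; omega
  · calc u * s ≤ u ^ 2 := by rw [sq]; gcongr
      _ ≤ u ^ s := Nat.pow_le_pow_right (by omega) hs2
      _ ≤ 2 * u ^ s := by omega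

/-- The arithmetic behind `d ≤ 2 t ^ (2 - 1/s)` for `t = u ^ s`. -/
theorem Nat.mul_le_two_mul_sq_of_pow_le {u s d : ℕ} (hs : 1 ≤ s)
    (hd : d ^ s ≤ (s - 1) * (u ^ s) ^ (2 * s - 1)) : u * d ≤ 2 * (u ^ s) ^ 2 := by
  set t := u ^ s with ht
  clear_value t
  by_contra! h
  have key : 2 ^ s * (t ^ (2 * s - 1) * t) < (s - 1) * (t ^ (2 * s - 1) * t) :=
    calc 2 ^ s * (t ^ (2 * s - 1) * t) = (2 * t ^ 2) ^ s := by
          rw [mul_pow, ← pow_mul, ← pow_succ]; congr 2; omega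
      _ < (u * d) ^ s := Nat.pow_lt_pow_left h (by omega)
      _ = t * d ^ s := by rw [mul_pow, ht]
      _ ≤ t * ((s - 1) * t ^ (2 * s - 1)) := by gcongr
      _ = (s - 1) * (t ^ (2 * s - 1) * t) := by ring
  have := Nat.lt_two_pow_self (n := s)
  have := Nat.lt_of_mul_lt_mul_right key
  omega

theorem Nat.eight_mul_mul_lt_seven_mul_sixteen_pow {k : ℕ} (hk : 1 ≤ k) :
    8 * k * (2 * k - 1) < 7 * 16 ^ k := by
  have h1 : k * k < 4 ^ k :=
    calc k * k < 2 ^ k * 2 ^ k := Nat.mul_self_lt_mul_self Nat.lt_two_pow_self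
      _ = 4 ^ k := by rw [← mul_pow]; norm_num
  have h2 : 4 ≤ 4 ^ k := Nat.le_self_pow (by omega) 4
  have h3 : 16 ^ k = 4 ^ k * 4 ^ k := by rw [← mul_pow]; norm_num
  have h4 : 8 * k * (2 * k - 1) ≤ 16 * (k * k) :=
    calc 8 * k * (2 * k - 1) ≤ 8 * k * (2 * k) := by gcongr; omega
      _ = 16 * (k * k) := by ring
  nlinarith

theorem Nat.mul_two_mul_add_mul_lt {k q : ℕ} (hk : 1 ≤ k) (hq : (64 * k) ^ (2 * k) = 16 * k * q) :
    k * (2 * q) + k * ((2 * k - 1) * (16 * k) ^ (2 * k)) < (64 * k) ^ (2 * k) := by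
  have hsmall : 8 * (k * ((2 * k - 1) * (16 * k) ^ (2 * k))) < 7 * (64 * k) ^ (2 * k) :=
    calc 8 * (k * ((2 * k - 1) * (16 * k) ^ (2 * k)))
        = 8 * k * (2 * k - 1) * (16 * k) ^ (2 * k) := by ring
      _ < 7 * 16 ^ k * (16 * k) ^ (2 * k) :=
        Nat.mul_lt_mul_of_pos_right (Nat.eight_mul_mul_lt_seven_mul_sixteen_pow hk)
          (by positivity)
      _ = 7 * (64 * k) ^ (2 * k) := by
        rw [show 64 * k = 4 * (16 * k) by ring, mul_pow 4, pow_mul 4]; ring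
  nlinarith

section KovariSosTuran

variable {α β : Type*} (r : α → β → Prop) (s : ℕ) (A : Finset α) (C : Finset β)

def NoCompleteBipartite : Prop :=
  ∀ S ⊆ A, ∀ T ⊆ C, #S = s → #T = s → ¬ ∀ a ∈ S, ∀ b ∈ T, r a b

variable {r s A C} [∀ a b, Decidable (r a b)]

theorem NoCompleteBipartite.sum_choose_card_bipartiteAbove_le
    (hno : NoCompleteBipartite r s A C) :
    ∑ a ∈ A, (#(C.bipartiteAbove r a)).choose s ≤ (s - 1) * (#C).choose s := by
  set R : α → Finset β → Prop := fun a T => ∀ b ∈ T, r a b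
  have hchoose : ∀ a, (#(C.bipartiteAbove r a)).choose s
      = #((C.powersetCard s).bipartiteAbove R a) := by
    intro a
    rw [← card_powersetCard]
    congr 1
    ext T
    simp only [bipartiteAbove, R, mem_powersetCard, mem_filter, subset_iff]
    grind
  have hbelow : ∀ T ∈ C.powersetCard s, #(A.bipartiteBelow R T) ≤ s - 1 := by
    intro T hT
    by_contra! hlt
    obtain ⟨S, hSA, hS⟩ := exists_subset_card_eq (show s ≤ #(A.bipartiteBelow R T) by omega)
    obtain ⟨hTC, hT⟩ := mem_powersetCard.1 hT
    exact hno S (hSA.trans (filter_subset _ _)) T hTC hS hT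
      fun a ha => (mem_filter.1 (hSA ha)).2
  calc ∑ a ∈ A, (#(C.bipartiteAbove r a)).choose s
      = ∑ T ∈ C.powersetCard s, #(A.bipartiteBelow R T) := by
        simp_rw [hchoose]; exact sum_card_bipartiteAbove_eq_sum_card_bipartiteBelow R
    _ ≤ (s - 1) * (#C).choose s := by
        simpa [mul_comm] using sum_le_card_nsmul _ _ _ hbelow

theorem NoCompleteBipartite.sum_pow_card_bipartiteAbove_le (hno : NoCompleteBipartite r s A C) :
    ∑ a ∈ A, (#(C.bipartiteAbove r a) + 1 - s) ^ s ≤ (s - 1) * #C ^ s :=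
  calc ∑ a ∈ A, (#(C.bipartiteAbove r a) + 1 - s) ^ s
      ≤ ∑ a ∈ A, s ! * (#(C.bipartiteAbove r a)).choose s := by
        gcongr with a
        rw [← Nat.descFactorial_eq_factorial_mul_choose]
        exact Nat.pow_sub_le_descFactorial _ _
    _ ≤ s ! * ((s - 1) * (#C).choose s) := by
        rw [← mul_sum]; gcongr; exact hno.sum_choose_card_bipartiteAbove_le
    _ = (s - 1) * (#C).descFactorial s := by
        rw [Nat.descFactorial_eq_factorial_mul_choose]; ring
    _ ≤ (s - 1) * #C ^ s := by gcongr; exact Nat.descFactorial_le_pow _ _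

theorem NoCompleteBipartite.card_filter_le_card_bipartiteAbove_mul_le
    (hno : NoCompleteBipartite r s A C) (d : ℕ) :
    #{a ∈ A | d ≤ #(C.bipartiteAbove r a)} * (d + 1 - s) ^ s ≤ (s - 1) * #C ^ s :=
  calc #{a ∈ A | d ≤ #(C.bipartiteAbove r a)} * (d + 1 - s) ^ s
      ≤ ∑ a ∈ A with d ≤ #(C.bipartiteAbove r a), (#(C.bipartiteAbove r a) + 1 - s) ^ s := by
        rw [← smul_eq_mul]
        exact card_nsmul_le_sum _ _ _ fun a ha => by gcongr; exact (mem_filter.1 ha).2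
    _ ≤ ∑ a ∈ A, (#(C.bipartiteAbove r a) + 1 - s) ^ s := sum_le_sum_of_subset (filter_subset _ _)
    _ ≤ (s - 1) * #C ^ s := hno.sum_pow_card_bipartiteAbove_le

theorem NoCompleteBipartite.card_filter_two_mul_le_card_bipartiteAbove_le {q w : ℕ}
    (hno : NoCompleteBipartite r s A C) (hs : 1 ≤ s) (hsq : s ≤ q) (hC : #C ≤ w * q) :
    #{a ∈ A | 2 * q ≤ #(C.bipartiteAbove r a)} ≤ (s - 1) * w ^ s := by
  refine Nat.le_of_mul_le_mul_right ?_ (pow_pos (by omega : 0 < q) s)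
  calc #{a ∈ A | 2 * q ≤ #(C.bipartiteAbove r a)} * q ^ s
      ≤ #{a ∈ A | 2 * q ≤ #(C.bipartiteAbove r a)} * (2 * q + 1 - s) ^ s := by gcongr; omega
    _ ≤ (s - 1) * #C ^ s := hno.card_filter_le_card_bipartiteAbove_mul_le _
    _ ≤ (s - 1) * w ^ s * q ^ s := by rw [mul_assoc, ← mul_pow]; gcongr

theorem NoCompleteBipartite.sum_card_bipartiteAbove_pow_le (hno : NoCompleteBipartite r s A C) :
    (∑ a ∈ A, (#(C.bipartiteAbove r a) + 1 - s)) ^ s ≤ (s - 1) * #A ^ (s - 1) * #C ^ s := by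
  cases s with
  | zero => exact absurd (hno ∅ (empty_subset _) ∅ (empty_subset _) rfl rfl) (by simp)
  | succ s =>
    calc (∑ a ∈ A, (#(C.bipartiteAbove r a) + 1 - (s + 1))) ^ (s + 1)
        ≤ #A ^ s * ∑ a ∈ A, (#(C.bipartiteAbove r a) + 1 - (s + 1)) ^ (s + 1) :=
          pow_sum_le_card_mul_sum_pow (fun _ _ => Nat.zero_le _) s
      _ ≤ #A ^ s * (s * #C ^ (s + 1)) := by gcongr; exact hno.sum_pow_card_bipartiteAbove_le
      _ = _ := by simp only [add_tsub_cancel_right]; ring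

/-- Kővári–Sós–Turán, with `t = u ^ s`: at most `4 t ^ (2 - 1/s)` pairs. -/
theorem NoCompleteBipartite.mul_sum_card_bipartiteAbove_le {u : ℕ}
    (hno : NoCompleteBipartite r s A C) (hs : 1 ≤ s) (hsu : s ≤ u) (hA : #A ≤ u ^ s)
    (hC : #C ≤ u ^ s) :
    u * ∑ a ∈ A, #(C.bipartiteAbove r a) ≤ 4 * (u ^ s) ^ 2 := by
  set t := u ^ s
  set d := ∑ a ∈ A, (#(C.bipartiteAbove r a) + 1 - s)
  have hd : d ^ s ≤ (s - 1) * t ^ (2 * s - 1) :=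
    calc d ^ s ≤ (s - 1) * #A ^ (s - 1) * #C ^ s := hno.sum_card_bipartiteAbove_pow_le
      _ ≤ (s - 1) * t ^ (s - 1) * t ^ s := by gcongr
      _ = (s - 1) * t ^ (2 * s - 1) := by rw [mul_assoc, ← pow_add]; congr 3; omega
  have hsum : ∑ a ∈ A, #(C.bipartiteAbove r a) ≤ d + t * s :=
    calc ∑ a ∈ A, #(C.bipartiteAbove r a) ≤ ∑ a ∈ A, ((#(C.bipartiteAbove r a) + 1 - s) + s) :=
          sum_le_sum fun _ _ => by omega
      _ ≤ d + t * s := by rw [sum_add_distrib, sum_const, smul_eq_mul]; gcongr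
  calc u * ∑ a ∈ A, #(C.bipartiteAbove r a) ≤ u * d + (u * s) * t := by nlinarith
    _ ≤ 2 * t ^ 2 + (2 * t) * t := add_le_add (Nat.mul_le_two_mul_sq_of_pow_le hs hd)
        (Nat.mul_le_mul_right t (Nat.mul_le_two_mul_pow_of_le hs hsu))
    _ = 4 * t ^ 2 := by ring

end KovariSosTuran

section GreedyChoice

theorem card_window_below_le (n m k : ℕ) : #{i : Fin n | (i : ℕ) < m ∧ m ≤ i + k} ≤ k :=
  calc #{i : Fin n | (i : ℕ) < m ∧ m ≤ i + k} ≤ #(Ico (m - k) m) :=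
        card_le_card_of_injOn Fin.val (fun i hi => by simp at hi ⊢; omega) Fin.val_injective.injOn
    _ ≤ k := by simp; omega

theorem card_window_above_le (n m k : ℕ) : #{j : Fin n | m < (j : ℕ) ∧ (j : ℕ) ≤ m + k} ≤ k :=
  calc #{j : Fin n | m < (j : ℕ) ∧ (j : ℕ) ≤ m + k} ≤ #(Ioc m (m + k)) :=
        card_le_card_of_injOn Fin.val (fun i hi => by simp at hi ⊢; omega) Fin.val_injective.injOn
    _ ≤ k := by simp

variable {V : Type*} [DecidableEq V] (r : V → V → Prop) [∀ a b, Decidable (r a b)]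
  {n k t D M : ℕ} (B : Fin n → Finset V)

theorem exists_mem_forall_not_rel_of_card_lt {m : Fin n} (hB : t ≤ #(B m))
    (hM : ∀ j : Fin n, (m : ℕ) < j → (j : ℕ) ≤ m + k →
      #{a ∈ B m | D ≤ #((B j).bipartiteAbove r a)} ≤ M)
    (ht : k * D + k * M < t) (y : Fin n → V)
    (hy : ∀ i : Fin n, (i : ℕ) < m → (m : ℕ) ≤ i + k → #((B m).bipartiteAbove r (y i)) < D) :
    ∃ v ∈ B m, (∀ i : Fin n, (i : ℕ) < m → (m : ℕ) ≤ i + k → ¬ r (y i) v) ∧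
      ∀ j : Fin n, (m : ℕ) < j → (j : ℕ) ≤ m + k → #((B j).bipartiteAbove r v) < D := by
  set before : Finset (Fin n) := {i | (i : ℕ) < m ∧ (m : ℕ) ≤ i + k}
  set after : Finset (Fin n) := {j | (m : ℕ) < j ∧ (j : ℕ) ≤ m + k}
  set bad := (before.biUnion fun i => (B m).bipartiteAbove r (y i)) ∪
    after.biUnion fun j => {a ∈ B m | D ≤ #((B j).bipartiteAbove r a)}
  have hbefore : #(before.biUnion fun i => (B m).bipartiteAbove r (y i)) ≤ k * D :=
    calc _ ≤ ∑ i ∈ before, #((B m).bipartiteAbove r (y i)) := card_biUnion_le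
      _ ≤ #before * D := by
          simpa using sum_le_card_nsmul _ _ _ fun i hi =>
            (hy i (mem_filter.1 hi).2.1 (mem_filter.1 hi).2.2).le
      _ ≤ k * D := by gcongr; exact card_window_below_le n m k
  have hafter : #(after.biUnion fun j => {a ∈ B m | D ≤ #((B j).bipartiteAbove r a)}) ≤ k * M :=
    calc _ ≤ ∑ j ∈ after, #{a ∈ B m | D ≤ #((B j).bipartiteAbove r a)} := card_biUnion_le
      _ ≤ #after * M := by
          simpa using sum_le_card_nsmul _ _ _ fun j hj =>
            hM j (mem_filter.1 hj).2.1 (mem_filter.1 hj).2.2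
      _ ≤ k * M := by gcongr; exact card_window_above_le n m k
  have hbad : #bad < #(B m) :=
    calc #bad ≤ _ + _ := card_union_le _ _
      _ < t := (add_le_add hbefore hafter).trans_lt ht
      _ ≤ #(B m) := hB
  obtain ⟨v, hv, hvbad⟩ := exists_mem_notMem_of_card_lt_card hbad
  simp only [bad, before, after, mem_union, mem_biUnion, mem_filter, mem_univ, true_and,
    not_or, not_exists, not_and] at hvbad
  exact ⟨v, hv, fun i h1 h2 hr => hvbad.1 i ⟨h1, h2⟩ (mem_filter.2 ⟨hv, hr⟩),
    fun j h1 h2 => not_le.1 (hvbad.2 j ⟨h1, h2⟩ hv)⟩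

/-- Replaces the local lemma: the `y i` are chosen from left to right, each of low degree towards
the next `k` sets, so that few vertices of `B j` are excluded by the choices made before `j`. -/
theorem exists_forall_mem_forall_not_rel (hB : ∀ i, t ≤ #(B i))
    (hM : ∀ i j : Fin n, (i : ℕ) < j → (j : ℕ) ≤ i + k →
      #{a ∈ B i | D ≤ #((B j).bipartiteAbove r a)} ≤ M)
    (ht : k * D + k * M < t) :
    ∃ y : Fin n → V, (∀ i, y i ∈ B i) ∧
      ∀ i j : Fin n, (i : ℕ) < j → (j : ℕ) ≤ i + k → ¬ r (y i) (y j) := by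
  suffices ∀ m ≤ n, ∃ y : Fin n → V, ∀ i : Fin n, (i : ℕ) < m → y i ∈ B i ∧
      (∀ j : Fin n, (i : ℕ) < j → (j : ℕ) ≤ i + k → #((B j).bipartiteAbove r (y i)) < D) ∧
      ∀ i' : Fin n, (i' : ℕ) < i → (i : ℕ) ≤ i' + k → ¬ r (y i') (y i) by
    obtain ⟨y, hy⟩ := this n le_rfl
    exact ⟨y, fun i => (hy i i.isLt).1, fun i j hij hjk => (hy j j.isLt).2.2 i hij hjk⟩
  intro m hm
  induction m with
  | zero =>
    have hne : ∀ i, (B i).Nonempty := fun i => card_pos.1 (by have := hB i; omega)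
    exact ⟨fun i => (hne i).choose, fun i hi => absurd hi (Nat.not_lt_zero _)⟩
  | succ m ih =>
    obtain ⟨y, hy⟩ := ih (by omega)
    set mF : Fin n := ⟨m, hm⟩
    obtain ⟨v, hvB, hv_before, hv_after⟩ := exists_mem_forall_not_rel_of_card_lt r B (hB mF)
      (hM mF) ht y fun i h1 h2 => (hy i h1).2.1 mF h1 h2
    refine ⟨Function.update y mF v, fun i hi => ?_⟩
    have hupd : ∀ i' : Fin n, (i' : ℕ) < m → Function.update y mF v i' = y i' :=
      fun i' hi' => Function.update_of_ne (Fin.ne_of_val_ne hi'.ne) _ _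
    obtain hi | rfl : (i : ℕ) < m ∨ i = mF := by
      rcases Nat.lt_succ_iff_lt_or_eq.1 hi with hi | hi
      exacts [Or.inl hi, Or.inr (Fin.ext hi)]
    · rw [hupd i hi]
      exact ⟨(hy i hi).1, (hy i hi).2.1,
        fun i' h1 h2 => hupd i' (h1.trans hi) ▸ (hy i hi).2.2 i' h1 h2⟩
    · rw [Function.update_self]
      exact ⟨hvB, hv_after, fun i' h1 h2 => hupd i' h1 ▸ hv_before i' h1 h2⟩

end GreedyChoice

theorem ncard_setOf_mem_mem_rel {α β : Type*} (r : α → β → Prop) [∀ a b, Decidable (r a b)]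
    (A : Finset α) (C : Finset β) :
    {p : α × β | p.1 ∈ A ∧ p.2 ∈ C ∧ r p.1 p.2}.ncard = ∑ a ∈ A, #(C.bipartiteAbove r a) := by
  rw [show {p : α × β | p.1 ∈ A ∧ p.2 ∈ C ∧ r p.1 p.2} = ↑{p ∈ A ×ˢ C | r p.1 p.2} by
    ext; simp [and_assoc], Set.ncard_coe_finset, card_filter, sum_product]
  simp only [bipartiteAbove, card_filter]

theorem div_sq_le_four_mul_rpow {u s e : ℕ} (hu : 0 < u) (hs : s ≠ 0)
    (h : u * e ≤ 4 * (u ^ s) ^ 2) :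
    (e : ℝ) / ((u ^ s : ℕ) : ℝ) ^ 2 ≤ 4 * ((u ^ s : ℕ) : ℝ) ^ (-(1 : ℝ) / s) := by
  have hroot : ((u ^ s : ℕ) : ℝ) ^ (-(1 : ℝ) / s) = (u : ℝ)⁻¹ := by
    rw [neg_div, Real.rpow_neg (by positivity), one_div, Nat.cast_pow,
      Real.pow_rpow_inv_natCast (by positivity) hs]
  rw [hroot, div_le_iff₀ (by positivity), ← div_eq_mul_inv, div_mul_eq_mul_div,
    le_div_iff₀' (by positivity)]
  exact_mod_cast h

theorem stmt_14_general {V : Type*} (blue : V → V → Prop)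
    (k n : ℕ) (hk : 1 ≤ k)
    (B : Fin n → Finset V)
    (hB : ∀ i, (B i).card = (64 * k) ^ (2 * k))
    (hnoKss : ∀ i j : Fin n, (i : ℕ) < (j : ℕ) → (j : ℕ) ≤ (i : ℕ) + k →
      ¬ ∃ (S T : Finset V), S ⊆ B i ∧ T ⊆ B j ∧ S.card = 2 * k ∧ T.card = 2 * k ∧
        ∀ u ∈ S, ∀ v ∈ T, blue u v) :
    (∀ i j : Fin n, (i : ℕ) < (j : ℕ) → (j : ℕ) ≤ (i : ℕ) + k →
      ({p : V × V | p.1 ∈ B i ∧ p.2 ∈ B j ∧ blue p.1 p.2}.ncard : ℝ) /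
          ((((64 * k) ^ (2 * k) : ℕ) : ℝ) ^ 2) ≤
        4 * (((64 * k) ^ (2 * k) : ℕ) : ℝ) ^ (-(1 : ℝ) / (2 * k))) ∧
    ∃ y : Fin n → V, (∀ i, y i ∈ B i) ∧
      ∀ i j : Fin n, (i : ℕ) < (j : ℕ) → (j : ℕ) ≤ (i : ℕ) + k →
        ¬ blue (y i) (y j) := by
  classical
  have hno : ∀ i j : Fin n, (i : ℕ) < j → (j : ℕ) ≤ i + k →
      NoCompleteBipartite blue (2 * k) (B i) (B j) :=
    fun i j hij hjk S hS T hT hSk hTk hST => hnoKss i j hij hjk ⟨S, T, hS, hT, hSk, hTk, hST⟩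
  refine ⟨fun i j hij hjk => ?_, ?_⟩
  · rw [ncard_setOf_mem_mem_rel, show (2 * k : ℝ) = ((2 * k : ℕ) : ℝ) by push_cast; ring]
    exact div_sq_le_four_mul_rpow (by omega) (by omega) <|
      (hno i j hij hjk).mul_sum_card_bipartiteAbove_le (by omega) (by omega) (hB i).le (hB j).le
  · obtain ⟨q, hkq, hq⟩ : ∃ q, (64 * k) ^ (2 * k) = 16 * k * q ∧ 2 * k ≤ q := by
      refine ⟨4 ^ (2 * k) * (16 * k) ^ (2 * k - 1), ?_, ?_⟩
      · rw [show 64 * k = 4 * (16 * k) by ring, mul_pow, mul_left_comm, ← pow_succ',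
          Nat.sub_add_cancel (by omega)]
      · calc 2 * k ≤ 1 * (16 * k) := by omega
          _ ≤ _ := Nat.mul_le_mul (Nat.one_le_pow _ _ (by norm_num)) (Nat.le_self_pow (by omega) _)
    exact exists_forall_mem_forall_not_rel blue B (fun i => (hB i).ge)
      (fun i j hij hjk => (hno i j hij hjk).card_filter_two_mul_le_card_bipartiteAbove_le
        (w := 16 * k) (by omega) hq (hB j ▸ hkq.le))
      (Nat.mul_two_mul_add_mul_lt hk hkq)

/-- Case 2, local lemma application: with `s = 2k`, `t = (64k)^{2k}`, if no
pair of clusters joined by an edge of `P_n^k` contains a blue `K_{s,s}`, then each such pair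
carries at most a `4t^{-1/s}` fraction of blue pairs, and one can choose `y_i ∈ B(x_i)` with
all relevant pairs red (non-blue). -/
theorem stmt_14 {V : Type*} (blue : V → V → Prop) (hsymm : ∀ u v, blue u v → blue v u)
    (k n : ℕ) (hk : 1 ≤ k)
    (B : Fin n → Finset V)
    (hB : ∀ i, (B i).card = (64 * k) ^ (2 * k))
    (hnoKss : ∀ i j : Fin n, (i : ℕ) < (j : ℕ) → (j : ℕ) ≤ (i : ℕ) + k →
      ¬ ∃ (S T : Finset V), S ⊆ B i ∧ T ⊆ B j ∧ S.card = 2 * k ∧ T.card = 2 * k ∧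
        ∀ u ∈ S, ∀ v ∈ T, blue u v) :
    (∀ i j : Fin n, (i : ℕ) < (j : ℕ) → (j : ℕ) ≤ (i : ℕ) + k →
      ({p : V × V | p.1 ∈ B i ∧ p.2 ∈ B j ∧ blue p.1 p.2}.ncard : ℝ) /
          ((((64 * k) ^ (2 * k) : ℕ) : ℝ) ^ 2) ≤
        4 * (((64 * k) ^ (2 * k) : ℕ) : ℝ) ^ (-(1 : ℝ) / (2 * k))) ∧
    ∃ y : Fin n → V, (∀ i, y i ∈ B i) ∧
      ∀ i j : Fin n, (i : ℕ) < (j : ℕ) → (j : ℕ) ≤ (i : ℕ) + k →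
        ¬ blue (y i) (y j) :=
  stmt_14_general blue k n hk B hB hnoKss
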